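/- arXiv:1412.5267 — 3 statements merged into one kernel-verified Lean document; each statement's English description precedes it below -/
import Mathlib

section
/- Let u ∈ ℓ¹(ℤ) and v ∈ ℓ¹(ℤ), and let m ≥ 1 be an integer. The Fourier series of the transition T_{u,m} v = m (v ∗ u^⋆) ↓ m equals Σ_{j=0}^{m−1} v̂((ξ + 2πj)/m) conj(û((ξ + 2πj)/m)) for all ξ ∈ ℝ. -/
open scoped BigOperators

/-- Fourier series `û(ξ) = Σ_k u(k) e^{-ikξ}` of a sequence on ℤ. -/
noncomputable def fser (u : ℤ → ℂ) (ξ : ℝ) : ℂ :=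
  ∑' k : ℤ, u k * Complex.exp (-(Complex.I * (k : ℂ) * (ξ : ℂ)))

/-- Convolution on ℤ. -/
noncomputable def conv1 (v u : ℤ → ℂ) (n : ℤ) : ℂ := ∑' k : ℤ, v k * u (n - k)

/-- Flip-conjugate `u^⋆(k) = conj (u (-k))`. -/
noncomputable def flipConj1 (u : ℤ → ℂ) (k : ℤ) : ℂ := starRingEnd ℂ (u (-k))

/-- The transition operator `T_{u,m} v = m ((v ∗ u^⋆) ↓ m)`. -/
noncomputable def trans1 (u v : ℤ → ℂ) (m : ℕ) (n : ℤ) : ℂ :=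
  (m : ℂ) * conv1 v (flipConj1 u) ((m : ℤ) * n)

/-! With `w = v ∗ u^⋆`, the convolution theorem on `ℓ¹(ℤ)` gives `ŵ = v̂ · conj û`. It remains to
see the aliasing identity `∑ⱼ ŵ((ξ + 2πj)/m) = m (w ↓ m)^(ξ)`: summing `e^{-ik(ξ + 2πj)/m}` over `j`
is a sum of `m`-th roots of unity, which vanishes unless `m ∣ k` and equals `m e^{-i(k/m)ξ}` if so. -/

open Complex

lemma norm_exp_neg_I_mul_intCast_mul_ofReal (k : ℤ) (ξ : ℝ) :
    ‖exp (-(I * k * ξ))‖ = 1 := by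
  rw [norm_exp]; simp

lemma summable_norm_fser_term {w : ℤ → ℂ} (hw : Summable fun k => ‖w k‖) (ξ : ℝ) :
    Summable fun k : ℤ => ‖w k * exp (-(I * k * ξ))‖ := by
  simpa only [norm_mul, norm_exp_neg_I_mul_intCast_mul_ofReal, mul_one] using hw

lemma fser_flipConj1 (u : ℤ → ℂ) (ξ : ℝ) : fser (flipConj1 u) ξ = starRingEnd ℂ (fser u ξ) := by
  rw [fser, fser, starRingEnd_apply, tsum_star, ← (Equiv.neg ℤ).tsum_eq]
  refine tsum_congr fun k => ?_
  rw [Equiv.neg_apply, flipConj1, neg_neg, star_mul', ← starRingEnd_apply, ← starRingEnd_apply,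
    ← exp_conj]
  congr 2
  simp only [map_neg, map_mul, conj_I, conj_ofReal, map_intCast]
  push_cast
  ring

lemma summable_norm_flipConj1 {u : ℤ → ℂ} (hu : Summable fun k => ‖u k‖) :
    Summable fun k => ‖flipConj1 u k‖ := by
  simpa only [flipConj1, RCLike.norm_conj, Function.comp_def, Equiv.neg_apply] using
    (Equiv.neg ℤ).summable_iff.2 hu

def convShear : ℤ × ℤ ≃ ℤ × ℤ :=
  (Equiv.prodComm ℤ ℤ).trans (Equiv.prodShear (Equiv.refl ℤ) fun k => Equiv.subRight k)

@[simp]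
lemma convShear_apply (q : ℤ × ℤ) : convShear q = (q.2, q.1 - q.2) := rfl

lemma summable_norm_conv1 {v w : ℤ → ℂ} (hv : Summable fun k => ‖v k‖)
    (hw : Summable fun k => ‖w k‖) : Summable fun n => ‖conv1 v w n‖ := by
  have hprod : Summable fun q => ‖v (convShear q).1‖ * ‖w (convShear q).2‖ :=
    convShear.summable_iff.mpr (hv.mul_of_nonneg hw (fun _ => norm_nonneg _) fun _ => norm_nonneg _)
  refine hprod.prod.of_nonneg_of_le (fun _ => norm_nonneg _) fun n => ?_
  have hnorm : Summable fun k => ‖v k * w (n - k)‖ := by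
    simpa only [convShear_apply, norm_mul] using hprod.prod_factor n
  simpa only [conv1, convShear_apply, norm_mul] using norm_tsum_le_tsum_norm hnorm

lemma fser_conv1 {v w : ℤ → ℂ} (hv : Summable fun k => ‖v k‖) (hw : Summable fun k => ‖w k‖)
    (ξ : ℝ) : fser (conv1 v w) ξ = fser v ξ * fser w ξ := by
  have hshear : Summable fun q => v (convShear q).1 * exp (-(I * (convShear q).1 * ξ)) *
      (w (convShear q).2 * exp (-(I * (convShear q).2 * ξ))) :=
    convShear.summable_iff.mpr (summable_mul_of_summable_norm (summable_norm_fser_term hv ξ)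
      (summable_norm_fser_term hw ξ))
  rw [fser, fser, fser, tsum_mul_tsum_of_summable_norm (summable_norm_fser_term hv ξ)
    (summable_norm_fser_term hw ξ), ← convShear.tsum_eq (fun p => _ * _),
    hshear.tsum_prod]
  refine tsum_congr fun n => ?_
  rw [conv1, ← tsum_mul_right]
  refine tsum_congr fun k => ?_
  rw [convShear_apply, mul_mul_mul_comm, ← exp_add]
  congr 2
  push_cast
  ring

lemma sum_range_exp_neg_two_pi_I_mul_div_pow {m : ℕ} (hm : m ≠ 0) (c : ℤ) :
    ∑ j ∈ Finset.range m, exp (-(2 * Real.pi * I * c / m)) ^ j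
      = if (m : ℤ) ∣ c then (m : ℂ) else 0 := by
  have hμ := isPrimitiveRoot_exp m hm
  have hζ : exp (-(2 * Real.pi * I * c / m)) = exp (2 * Real.pi * I / m) ^ (-c) := by
    rw [← exp_int_mul]; congr 1; push_cast; ring
  rw [hζ]
  split_ifs with hdvd
  · simp [(hμ.zpow_eq_one_iff_dvd _).2 (dvd_neg.2 hdvd)]
  · have hne : exp (2 * Real.pi * I / m) ^ (-c) ≠ 1 :=
      fun h => hdvd (dvd_neg.1 ((hμ.zpow_eq_one_iff_dvd _).1 h))
    rw [geom_sum_eq hne, ← zpow_natCast, ← zpow_mul, mul_comm (-c), zpow_mul, zpow_natCast,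
      hμ.pow_eq_one, one_zpow, sub_self, zero_div]

lemma sum_fser_div_eq_mul_fser_downsample {w : ℤ → ℂ} (hw : Summable fun k => ‖w k‖) {m : ℕ}
    (hm : m ≠ 0) (ξ : ℝ) :
    ∑ j ∈ Finset.range m, fser w ((ξ + 2 * Real.pi * j) / m)
      = m * fser (fun n => w (m * n)) ξ := by
  have hsplit : ∀ (k : ℤ) (j : ℕ), w k * exp (-(I * k * ((ξ + 2 * Real.pi * j) / m : ℝ)))
      = w k * exp (-(I * k * ξ / m)) * exp (-(2 * Real.pi * I * k / m)) ^ j := by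
    intro k j
    rw [mul_assoc (w k), ← exp_nat_mul, ← exp_add]
    congr 2
    push_cast
    field_simp
    ring
  simp only [fser]
  rw [← Summable.tsum_finsetSum fun j _ => (summable_norm_fser_term hw _).of_norm]
  simp only [hsplit, ← Finset.mul_sum, sum_range_exp_neg_two_pi_I_mul_div_pow hm]
  rw [← (mul_right_injective₀ (Nat.cast_ne_zero.2 hm : (m : ℤ) ≠ 0)).tsum_eq, ← tsum_mul_left]
  · refine tsum_congr fun n => ?_
    rw [if_pos (dvd_mul_right _ _)]
    push_cast
    field_simp
  · intro k hk
    obtain ⟨n, rfl⟩ : (m : ℤ) ∣ k := by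
      by_contra hdvd
      simp [hdvd] at hk
    exact ⟨n, rfl⟩

theorem fser_trans (u v : ℤ → ℂ) (hu : Summable fun k => ‖u k‖)
    (hv : Summable fun k => ‖v k‖) (m : ℕ) (hm : 1 ≤ m) :
    ∀ ξ : ℝ, fser (fun n => trans1 u v m n) ξ =
      ∑ j ∈ Finset.range m,
        fser v ((ξ + 2 * Real.pi * j) / m) * starRingEnd ℂ (fser u ((ξ + 2 * Real.pi * j) / m)) := by
  intro ξ
  have hflip := summable_norm_flipConj1 hu
  calc fser (fun n => trans1 u v m n) ξ
      = m * fser (fun n => conv1 v (flipConj1 u) (m * n)) ξ := by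
        simp only [fser, trans1, mul_assoc, tsum_mul_left]
    _ = ∑ j ∈ Finset.range m, fser (conv1 v (flipConj1 u)) ((ξ + 2 * Real.pi * j) / m) :=
        (sum_fser_div_eq_mul_fser_downsample (summable_norm_conv1 hv hflip) (by omega) ξ).symm
    _ = _ := by simp only [fser_conv1 hv hflip, fser_flipConj1]
end

section
/- Under the conditions ε_0+ε_1 ≤ c_1 ≤ π/2−ε_0−ε_1, π/2+ε_2+ε_3 ≤ c_2 ≤ π−ε_2−ε_3, ε_1+ε_2 ≤ c_2−c_1 ≤ π/2−ε_1−ε_2, the 2π-periodic bump filters â = χ_{[−c_1,c_1];ε_1,ε_1}, b̂₁ᵖ = χ_{[c_1,c_2];ε_1,ε_2}, b̂₂ᵖ = χ_{[c_2,π];ε_2,ε_3} (defined on [−π,π)) satisfy the shift-non-overlapping properties: â(ξ)â(ξ+π) = 0 for all ξ ∈ ℝ, and û(ξ)û(ξ + γπ/2) = 0 for all ξ ∈ ℝ, γ ∈ {1,2,3}, and u ∈ {b₁ᵖ, b₂ᵖ, b₁ⁿ, b₂ⁿ}, where b̂ₗⁿ(ξ) := conj(b̂ₗᵖ(−ξ)).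 -/
/-- The bump function χ_{[c_L,c_R];ε_L,ε_R} of the paper. -/
noncomputable def bump (cL cR εL εR ξ : ℝ) : ℝ :=
  if ξ ≤ cL - εL ∨ cR + εR ≤ ξ then 0
  else if ξ < cL + εL then Real.cos (Real.pi * (cL + εL - ξ) / (4 * εL))
  else if ξ ≤ cR - εR then 1
  else Real.cos (Real.pi * (ξ - cR + εR) / (4 * εR))

/-- 2π-periodic extension from the fundamental interval [-π, π). -/
noncomputable def per2pi (f : ℝ → ℝ) (ξ : ℝ) : ℝ :=
  f (ξ - 2 * Real.pi * ⌊(ξ + Real.pi) / (2 * Real.pi)⌋)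

open Real Set Function

lemma per2pi_eq_toIcoMod (f : ℝ → ℝ) (ξ : ℝ) :
    per2pi f ξ = f (toIcoMod two_pi_pos (-π) ξ) := by
  rw [per2pi, toIcoMod, toIcoDiv_eq_floor, sub_neg_eq_add, zsmul_eq_mul, mul_comm]

lemma support_bump_subset (cL cR εL εR : ℝ) :
    support (bump cL cR εL εR) ⊆ Ioo (cL - εL) (cR + εR) := by
  intro x hx
  by_contra hout
  rw [mem_Ioo, not_and_or, not_lt, not_lt] at hout
  exact hx (if_pos hout)

lemma le_abs_add_int_mul {w s p : ℝ} (k : ℤ) (hw : w ≤ |s|) (hp : |s| + w ≤ p) :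
    w ≤ |s + k * p| := by
  rcases eq_or_ne k 0 with rfl | hk
  · simpa using hw
  have hk1 : (1 : ℝ) ≤ |(k : ℝ)| := by exact_mod_cast Int.one_le_abs hk
  calc w ≤ |p| - |s| := by linarith [le_abs_self p]
    _ ≤ |k * p| - |s| := by rw [abs_mul]; nlinarith [abs_nonneg p]
    _ ≤ |s + k * p| := by
      have := abs_sub_abs_le_abs_sub (k * p) (-s)
      rwa [abs_neg, sub_neg_eq_add, add_comm] at this

/-- Two points of the fundamental interval that differ by `s` modulo `2π` cannot both lie in an
interval of length at most `min |s| (2π - |s|)`. -/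
lemma per2pi_mul_per2pi_add_eq_zero {f : ℝ → ℝ} {a b s : ℝ}
    (hf : support f ∩ Ico (-π) π ⊆ Ioo a b)
    (hw : b - a ≤ |s|) (hs : |s| + (b - a) ≤ 2 * π) (ξ : ℝ) :
    per2pi f ξ * per2pi f (ξ + s) = 0 := by
  rw [per2pi_eq_toIcoMod, per2pi_eq_toIcoMod, mul_eq_zero]
  by_contra! hne
  set x := toIcoMod two_pi_pos (-π) ξ
  set y := toIcoMod two_pi_pos (-π) (ξ + s)
  have hmem : ∀ z, f (toIcoMod two_pi_pos (-π) z) ≠ 0 → toIcoMod two_pi_pos (-π) z ∈ Ioo a b :=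
    fun z hz => hf ⟨hz, by
      simpa [two_mul, ← sub_eq_add_neg] using toIcoMod_mem_Ico two_pi_pos (-π) z⟩
  obtain ⟨hxa, hxb⟩ := hmem ξ hne.1
  obtain ⟨hya, hyb⟩ := hmem (ξ + s) hne.2
  have hyx : y - x = s + (toIcoDiv two_pi_pos (-π) ξ - toIcoDiv two_pi_pos (-π) (ξ + s) : ℤ)
      * (2 * π) := by
    have := self_sub_toIcoMod_eq_mul two_pi_pos (-π) ξ
    have := self_sub_toIcoMod_eq_mul two_pi_pos (-π) (ξ + s)
    push_cast
    linarith
  have := le_abs_add_int_mul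
    (toIcoDiv two_pi_pos (-π) ξ - toIcoDiv two_pi_pos (-π) (ξ + s)) hw hs
  rw [← hyx] at this
  exact this.not_gt (abs_sub_lt_iff.mpr ⟨by linarith, by linarith⟩)

lemma per2pi_mul_per2pi_quarter_shift_eq_zero {f : ℝ → ℝ} {a b : ℝ}
    (hf : support f ∩ Ico (-π) π ⊆ Ioo a b) (hw : b - a ≤ π / 2)
    {γ : ℕ} (hγ : γ ∈ ({1, 2, 3} : Finset ℕ)) (ξ : ℝ) :
    per2pi f ξ * per2pi f (ξ + γ * π / 2) = 0 ∧
      per2pi f (-ξ) * per2pi f (-(ξ + γ * π / 2)) = 0 := by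
  have hγ' : (1 : ℝ) ≤ γ ∧ (γ : ℝ) ≤ 3 := by fin_cases hγ <;> norm_num
  have habs : |(γ * π / 2 : ℝ)| = γ * π / 2 := abs_of_nonneg (by positivity)
  have hw' : b - a ≤ |(γ * π / 2 : ℝ)| := by rw [habs]; nlinarith [pi_pos]
  have hs : |(γ * π / 2 : ℝ)| + (b - a) ≤ 2 * π := by rw [habs]; nlinarith [pi_pos]
  refine ⟨per2pi_mul_per2pi_add_eq_zero hf hw' hs ξ, ?_⟩
  rw [neg_add]
  exact per2pi_mul_per2pi_add_eq_zero hf (by rwa [abs_neg]) (by rwa [abs_neg]) (-ξ)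

theorem ctf6_shift_nonoverlapping_general
    (c1 c2 ε0 ε1 ε2 ε3 : ℝ)
    (hε0 : 0 < ε0) (hε3 : 0 < ε3)
    (h1' : c1 ≤ Real.pi / 2 - ε0 - ε1)
    (h2 : Real.pi / 2 + ε2 + ε3 ≤ c2)
    (h3' : c2 - c1 ≤ Real.pi / 2 - ε1 - ε2) :
    (∀ ξ : ℝ,
      per2pi (bump (-c1) c1 ε1 ε1) ξ * per2pi (bump (-c1) c1 ε1 ε1) (ξ + Real.pi) = 0) ∧
    (∀ ξ : ℝ, ∀ γ ∈ ({1, 2, 3} : Finset ℕ),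
      per2pi (bump c1 c2 ε1 ε2) ξ *
        per2pi (bump c1 c2 ε1 ε2) (ξ + γ * Real.pi / 2) = 0 ∧
      per2pi (bump c2 Real.pi ε2 ε3) ξ *
        per2pi (bump c2 Real.pi ε2 ε3) (ξ + γ * Real.pi / 2) = 0 ∧
      per2pi (bump c1 c2 ε1 ε2) (-ξ) *
        per2pi (bump c1 c2 ε1 ε2) (-(ξ + γ * Real.pi / 2)) = 0 ∧
      per2pi (bump c2 Real.pi ε2 ε3) (-ξ) *
        per2pi (bump c2 Real.pi ε2 ε3) (-(ξ + γ * Real.pi / 2)) = 0) := by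
  have hπ : |π| = π := abs_of_pos pi_pos
  have ha : support (bump (-c1) c1 ε1 ε1) ∩ Ico (-π) π ⊆ Ioo (-c1 - ε1) (c1 + ε1) :=
    inter_subset_left.trans (support_bump_subset _ _ _ _)
  have hb₁ : support (bump c1 c2 ε1 ε2) ∩ Ico (-π) π ⊆ Ioo (c1 - ε1) (c2 + ε2) :=
    inter_subset_left.trans (support_bump_subset _ _ _ _)
  have hb₂ : support (bump c2 π ε2 ε3) ∩ Ico (-π) π ⊆ Ioo (c2 - ε2) π :=
    fun x ⟨hx, hxπ⟩ => ⟨(support_bump_subset _ _ _ _ hx).1, hxπ.2⟩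
  refine ⟨per2pi_mul_per2pi_add_eq_zero ha (by rw [hπ]; linarith) (by rw [hπ]; linarith),
    fun ξ γ hγ => ?_⟩
  obtain ⟨hb₁ξ, hb₁ξ'⟩ := per2pi_mul_per2pi_quarter_shift_eq_zero hb₁ (by linarith) hγ ξ
  obtain ⟨hb₂ξ, hb₂ξ'⟩ := per2pi_mul_per2pi_quarter_shift_eq_zero hb₂ (by linarith) hγ ξ
  exact ⟨hb₁ξ, hb₂ξ, hb₁ξ', hb₂ξ'⟩

theorem ctf6_shift_nonoverlapping
    (c0 c1 c2 ε0 ε1 ε2 ε3 : ℝ)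
    (hc0 : 0 < c0) (hc01 : c0 < c1) (hc12 : c1 < c2) (hc2 : c2 < Real.pi)
    (hε0 : 0 < ε0) (hε1 : 0 < ε1) (hε2 : 0 < ε2) (hε3 : 0 < ε3)
    (h1 : ε0 + ε1 ≤ c1) (h1' : c1 ≤ Real.pi / 2 - ε0 - ε1)
    (h2 : Real.pi / 2 + ε2 + ε3 ≤ c2) (h2' : c2 ≤ Real.pi - ε2 - ε3)
    (h3 : ε1 + ε2 ≤ c2 - c1) (h3' : c2 - c1 ≤ Real.pi / 2 - ε1 - ε2) :
    (∀ ξ : ℝ,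
      per2pi (bump (-c1) c1 ε1 ε1) ξ * per2pi (bump (-c1) c1 ε1 ε1) (ξ + Real.pi) = 0) ∧
    (∀ ξ : ℝ, ∀ γ ∈ ({1, 2, 3} : Finset ℕ),
      per2pi (bump c1 c2 ε1 ε2) ξ *
        per2pi (bump c1 c2 ε1 ε2) (ξ + γ * Real.pi / 2) = 0 ∧
      per2pi (bump c2 Real.pi ε2 ε3) ξ *
        per2pi (bump c2 Real.pi ε2 ε3) (ξ + γ * Real.pi / 2) = 0 ∧
      per2pi (bump c1 c2 ε1 ε2) (-ξ) *
        per2pi (bump c1 c2 ε1 ε2) (-(ξ + γ * Real.pi / 2)) = 0 ∧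
      per2pi (bump c2 Real.pi ε2 ε3) (-ξ) *
        per2pi (bump c2 Real.pi ε2 ε3) (-(ξ + γ * Real.pi / 2)) = 0) :=
  ctf6_shift_nonoverlapping_general c1 c2 ε0 ε1 ε2 ε3 hε0 hε3 h1' h2 h3'
end

section
/- Under the conditions of Theorem 3.3 together with the additional inequalities c_2/2 + ε_2/2 + c_1 + ε_1 ≤ π and c_1 + ε_1 + ε_3/2 ≤ π/2, the multilevel high-pass filters b̂ₗᵖ_{,j}(ξ) := â(ξ)â(2ξ)⋯â(2^{j−2}ξ) b̂ₗᵖ(2^{j−1}ξ) satisfy the ideal frequency separation property: b̂ₗᵖ_{,j}(ξ) = 0 for all ξ ∈ [−π,0] and b̂ₗⁿ_{,j}(ξ) = 0 for all ξ ∈ [0,π], for all levels j ≥ 2 and ℓ = 1,2. -/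
open scoped BigOperators

lemma bump_zero_left {cL cR εL εR ξ : ℝ} (h : ξ ≤ cL - εL) :
    bump cL cR εL εR ξ = 0 := by
  unfold bump; rw [if_pos (Or.inl h)]

lemma bump_zero_right {cL cR εL εR ξ : ℝ} (h : cR + εR ≤ ξ) :
    bump cL cR εL εR ξ = 0 := by
  unfold bump; rw [if_pos (Or.inr h)]

lemma per2pi_eq_self (f : ℝ → ℝ) {ξ : ℝ} (h1 : -Real.pi ≤ ξ) (h2 : ξ < Real.pi) :
    per2pi f ξ = f ξ := by
  have hπ := Real.pi_pos
  have hfl : ⌊(ξ + Real.pi) / (2 * Real.pi)⌋ = 0 := by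
    rw [Int.floor_eq_zero_iff]
    constructor
    · exact div_nonneg (by linarith) (by linarith)
    · rw [div_lt_one (by linarith)]; linarith
  unfold per2pi
  rw [hfl]
  norm_num

lemma per2pi_pi (f : ℝ → ℝ) : per2pi f Real.pi = f (-Real.pi) := by
  have hπ := Real.pi_pos
  have hfl : ⌊(Real.pi + Real.pi) / (2 * Real.pi)⌋ = 1 := by
    have : (Real.pi + Real.pi) / (2 * Real.pi) = 1 := by
      field_simp; ring
    rw [this]; exact Int.floor_one
  unfold per2pi
  rw [hfl]
  norm_num
  ring_nf

/-- Generic induction for the negative half-line. -/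
lemma key_neg (A G : ℝ → ℝ)
    (hA : ∀ ξ : ℝ, -Real.pi ≤ ξ → ξ ≤ -(Real.pi / 2) → A ξ = 0)
    (hbase : ∀ ξ : ℝ, -Real.pi ≤ ξ → ξ ≤ 0 → A ξ * G (2 * ξ) = 0) :
    ∀ n : ℕ, ∀ ξ : ℝ, -Real.pi ≤ ξ → ξ ≤ 0 →
      (∏ i ∈ Finset.range (n + 1), A (2 ^ i * ξ)) * G (2 ^ (n + 1) * ξ) = 0 := by
  intro n
  induction n with
  | zero =>
    intro ξ h1 h2
    have := hbase ξ h1 h2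
    simpa [Finset.prod_range_one] using this
  | succ n ih =>
    intro ξ h1 h2
    by_cases hc : ξ ≤ -(Real.pi / 2)
    · have h0 : A ((2 : ℝ) ^ 0 * ξ) = 0 := by simpa using hA ξ h1 hc
      rw [Finset.prod_eq_zero (Finset.mem_range.2 (Nat.succ_pos _)) h0, zero_mul]
    · push_neg at hc
      have hπ := Real.pi_pos
      have := ih (2 * ξ) (by linarith) (by linarith)
      have hprod : (∏ i ∈ Finset.range (n + 2), A (2 ^ i * ξ))
          = (∏ i ∈ Finset.range (n + 1), A (2 ^ i * (2 * ξ))) * A ξ := by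
        rw [Finset.prod_range_succ']
        congr 1
        · refine Finset.prod_congr rfl fun i _ => ?_
          rw [show (2 : ℝ) ^ (i + 1) * ξ = 2 ^ i * (2 * ξ) by ring]
        · norm_num
      have hG : (2 : ℝ) ^ (n + 2) * ξ = 2 ^ (n + 1) * (2 * ξ) := by ring
      rw [hprod, hG, mul_right_comm, this, zero_mul]

/-- Generic induction for the positive half-line. -/
lemma key_pos (A G : ℝ → ℝ)
    (hA : ∀ ξ : ℝ, Real.pi / 2 ≤ ξ → ξ ≤ Real.pi → A ξ = 0)
    (hbase : ∀ ξ : ℝ, 0 ≤ ξ → ξ ≤ Real.pi → A ξ * G (-(2 * ξ)) = 0) :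
    ∀ n : ℕ, ∀ ξ : ℝ, 0 ≤ ξ → ξ ≤ Real.pi →
      (∏ i ∈ Finset.range (n + 1), A (2 ^ i * ξ)) * G (-(2 ^ (n + 1) * ξ)) = 0 := by
  intro n
  induction n with
  | zero =>
    intro ξ h1 h2
    have := hbase ξ h1 h2
    simpa [Finset.prod_range_one] using this
  | succ n ih =>
    intro ξ h1 h2
    by_cases hc : Real.pi / 2 ≤ ξ
    · have h0 : A ((2 : ℝ) ^ 0 * ξ) = 0 := by simpa using hA ξ hc h2
      rw [Finset.prod_eq_zero (Finset.mem_range.2 (Nat.succ_pos _)) h0, zero_mul]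
    · push_neg at hc
      have hπ := Real.pi_pos
      have := ih (2 * ξ) (by linarith) (by linarith)
      have hprod : (∏ i ∈ Finset.range (n + 2), A (2 ^ i * ξ))
          = (∏ i ∈ Finset.range (n + 1), A (2 ^ i * (2 * ξ))) * A ξ := by
        rw [Finset.prod_range_succ']
        congr 1
        · refine Finset.prod_congr rfl fun i _ => ?_
          rw [show (2 : ℝ) ^ (i + 1) * ξ = 2 ^ i * (2 * ξ) by ring]
        · norm_num
      have hG : -((2 : ℝ) ^ (n + 2) * ξ) = -(2 ^ (n + 1) * (2 * ξ)) := by ring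
      rw [hprod, hG, mul_right_comm, this, zero_mul]

theorem ideal_frequency_separation
    (c0 c1 c2 ε0 ε1 ε2 ε3 : ℝ)
    (hc0 : 0 < c0) (hc01 : c0 < c1) (hc12 : c1 < c2) (hc2 : c2 < Real.pi)
    (hε0 : 0 < ε0) (hε1 : 0 < ε1) (hε2 : 0 < ε2) (hε3 : 0 < ε3)
    (h1 : ε0 + ε1 ≤ c1) (h1' : c1 ≤ Real.pi / 2 - ε0 - ε1)
    (h2 : Real.pi / 2 + ε2 + ε3 ≤ c2) (h2' : c2 ≤ Real.pi - ε2 - ε3)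
    (h3 : ε1 + ε2 ≤ c2 - c1) (h3' : c2 - c1 ≤ Real.pi / 2 - ε1 - ε2)
    (hfs1 : c2 / 2 + ε2 / 2 + c1 + ε1 ≤ Real.pi)
    (hfs2 : c1 + ε1 + ε3 / 2 ≤ Real.pi / 2) :
    ∀ j : ℕ, 2 ≤ j →
      ((∀ ξ ∈ Set.Icc (-Real.pi) (0 : ℝ),
        (∏ i ∈ Finset.range (j - 1), per2pi (bump (-c1) c1 ε1 ε1) (2 ^ i * ξ)) *
          per2pi (bump c1 c2 ε1 ε2) (2 ^ (j - 1) * ξ) = 0 ∧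
        (∏ i ∈ Finset.range (j - 1), per2pi (bump (-c1) c1 ε1 ε1) (2 ^ i * ξ)) *
          per2pi (bump c2 Real.pi ε2 ε3) (2 ^ (j - 1) * ξ) = 0) ∧
      (∀ ξ ∈ Set.Icc (0 : ℝ) Real.pi,
        (∏ i ∈ Finset.range (j - 1), per2pi (bump (-c1) c1 ε1 ε1) (2 ^ i * ξ)) *
          per2pi (bump c1 c2 ε1 ε2) (-(2 ^ (j - 1) * ξ)) = 0 ∧
        (∏ i ∈ Finset.range (j - 1), per2pi (bump (-c1) c1 ε1 ε1) (2 ^ i * ξ)) *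
          per2pi (bump c2 Real.pi ε2 ε3) (-(2 ^ (j - 1) * ξ)) = 0)) := by
  have hπ := Real.pi_pos
  set A : ℝ → ℝ := per2pi (bump (-c1) c1 ε1 ε1) with hAdef
  set G1 : ℝ → ℝ := per2pi (bump c1 c2 ε1 ε2) with hG1def
  set G2 : ℝ → ℝ := per2pi (bump c2 Real.pi ε2 ε3) with hG2def
  -- A vanishes on [-π, -(c1+ε1)]
  have hAneg : ∀ ξ : ℝ, -Real.pi ≤ ξ → ξ ≤ -(c1 + ε1) → A ξ = 0 := by
    intro ξ hl hr
    rw [hAdef, per2pi_eq_self _ hl (by linarith)]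
    exact bump_zero_left (by linarith)
  -- A vanishes on [c1+ε1, π]
  have hApos : ∀ ξ : ℝ, c1 + ε1 ≤ ξ → ξ ≤ Real.pi → A ξ = 0 := by
    intro ξ hl hr
    rcases lt_or_eq_of_le hr with h | h
    · rw [hAdef, per2pi_eq_self _ (by linarith) h]
      exact bump_zero_right (by linarith)
    · rw [hAdef, h, per2pi_pi]
      exact bump_zero_left (by linarith)
  -- G1, G2 vanish on [-π, 0]
  have hG1z : ∀ η : ℝ, -Real.pi ≤ η → η ≤ 0 → G1 η = 0 := by
    intro η hl hr
    rw [hG1def, per2pi_eq_self _ hl (by linarith)]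
    exact bump_zero_left (by linarith)
  have hG2z : ∀ η : ℝ, -Real.pi ≤ η → η ≤ 0 → G2 η = 0 := by
    intro η hl hr
    rw [hG2def, per2pi_eq_self _ hl (by linarith)]
    exact bump_zero_left (by linarith)
  -- A vanishes near the endpoints of half period
  have hA' : ∀ ξ : ℝ, -Real.pi ≤ ξ → ξ ≤ -(Real.pi / 2) → A ξ = 0 := fun ξ hl hr =>
    hAneg ξ hl (by linarith)
  have hA'' : ∀ ξ : ℝ, Real.pi / 2 ≤ ξ → ξ ≤ Real.pi → A ξ = 0 := fun ξ hl hr =>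
    hApos ξ (by linarith) hr
  -- base cases
  have hbase : ∀ G : ℝ → ℝ, (∀ η : ℝ, -Real.pi ≤ η → η ≤ 0 → G η = 0) →
      ∀ ξ : ℝ, -Real.pi ≤ ξ → ξ ≤ 0 → A ξ * G (2 * ξ) = 0 := by
    intro G hG ξ hl hr
    by_cases hc : ξ ≤ -(c1 + ε1)
    · rw [hAneg ξ hl hc, zero_mul]
    · push_neg at hc
      rw [hG (2 * ξ) (by linarith) (by linarith), mul_zero]
  have hbase' : ∀ G : ℝ → ℝ, (∀ η : ℝ, -Real.pi ≤ η → η ≤ 0 → G η = 0) →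
      ∀ ξ : ℝ, 0 ≤ ξ → ξ ≤ Real.pi → A ξ * G (-(2 * ξ)) = 0 := by
    intro G hG ξ hl hr
    by_cases hc : c1 + ε1 ≤ ξ
    · rw [hApos ξ hc hr, zero_mul]
    · push_neg at hc
      rw [hG (-(2 * ξ)) (by linarith) (by linarith), mul_zero]
  intro j hj
  obtain ⟨k, rfl⟩ : ∃ k, j = k + 2 := ⟨j - 2, by omega⟩
  have hjk : k + 2 - 1 = k + 1 := rfl
  rw [hjk]
  constructor
  · intro ξ hξ
    obtain ⟨hl, hr⟩ := hξ
    exact ⟨key_neg A G1 hA' (hbase G1 hG1z) k ξ hl hr,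
      key_neg A G2 hA' (hbase G2 hG2z) k ξ hl hr⟩
  · intro ξ hξ
    obtain ⟨hl, hr⟩ := hξ
    exact ⟨key_pos A G1 hA'' (hbase' G1 hG1z) k ξ hl hr,
      key_pos A G2 hA'' (hbase' G2 hG2z) k ξ hl hr⟩
end
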